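/- Let f : 𝔻 → ℂ be holomorphic. Then f is a Bloch function if and only if f is Lipschitz as a map from 𝔻 equipped with the hyperbolic distance ρ to ℂ with the Euclidean distance; moreover β_f = sup_{z,w∈𝔻, z≠w} |f(z)−f(w)| / ρ(z,w). -/

import Mathlib

/-!
The disk automorphisms `moebius w`, involutions exchanging `0` and `w`, preserve both sides:
`(1 - |ζ|²) |(f ∘ moebius w)'(ζ)| = (1 - |moebius w ζ|²) |f'(moebius w ζ)|` and
`ρ(z, w) = arctanh |moebius w z|`. So it suffices to compare the two at the origin. There a
Bloch bound `(1 - |ζ|²) |g'(ζ)| ≤ M` integrates along the radius to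
`|g(c) - g(0)| ≤ M ∫₀^|c| dt / (1 - t²) = M arctanh |c|`, and conversely
`|g(ζ) - g(0)| ≤ L arctanh |ζ|` forces `|g'(0)| ≤ L` because `arctanh x ~ x` at `0`.
-/

open Complex Metric Set
open scoped ENNReal

/-- The inverse hyperbolic tangent, `arctanh x = (1/2) log((1+x)/(1-x))`. -/
noncomputable def arctanh (x : ℝ) : ℝ := Real.log ((1 + x) / (1 - x)) / 2

/-- The hyperbolic (Bergman) distance on the unit disk:
`ρ(z,w) = arctanh |(z-w)/(1-conj(w) z)|`. -/
noncomputable def hypDist (z w : ℂ) : ℝ :=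
  arctanh ‖(z - w) / (1 - (starRingEnd ℂ) w * z)‖

/-- The Bloch seminorm as an extended real number:
`β_f = sup_{z ∈ 𝔻} (1-|z|²)|f'(z)|`. -/
noncomputable def blochSemiE (f : ℂ → ℂ) : ℝ≥0∞ :=
  ⨆ z : ball (0 : ℂ) 1, ENNReal.ofReal ((1 - ‖(z : ℂ)‖ ^ 2) * ‖deriv f (z : ℂ)‖)

/-- The Lipschitz number of `f : (𝔻, ρ) → (ℂ, |·|)` as an extended real number:
`sup_{z ≠ w} |f(z)-f(w)|/ρ(z,w)`. -/
noncomputable def lipNumE (f : ℂ → ℂ) : ℝ≥0∞ :=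
  ⨆ p : {p : ball (0 : ℂ) 1 × ball (0 : ℂ) 1 // (p.1 : ℂ) ≠ (p.2 : ℂ)},
    ENNReal.ofReal (‖f (p.1.1 : ℂ) - f (p.1.2 : ℂ)‖ /
      hypDist (p.1.1 : ℂ) (p.1.2 : ℂ))

open Filter Topology ComplexConjugate

lemma arctanh_zero : arctanh 0 = 0 := by simp [arctanh]

lemma arctanh_pos {x : ℝ} (h0 : 0 < x) (h1 : x < 1) : 0 < arctanh x := by
  have : 1 < (1 + x) / (1 - x) := by rw [lt_div_iff₀ (by linarith)]; linarith
  exact half_pos (Real.log_pos this)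

lemma arctanh_le_div_one_sub {x : ℝ} (h0 : 0 ≤ x) (h1 : x < 1) : arctanh x ≤ x / (1 - x) := by
  have hlog :=
    Real.log_le_sub_one_of_pos (div_pos (by linarith : 0 < 1 + x) (by linarith : 0 < 1 - x))
  have : (1 + x) / (1 - x) - 1 = 2 * (x / (1 - x)) := by
    field_simp [(by linarith : (1 : ℝ) - x ≠ 0)]
    ring
  unfold arctanh
  linarith

lemma hasDerivAt_arctanh {x : ℝ} (hx : x ∈ Ioo (-1 : ℝ) 1) :
    HasDerivAt arctanh (1 / (1 - x ^ 2)) x := by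
  have hadd : 0 < 1 + x := by linarith [hx.1]
  have hsub : 0 < 1 - x := by linarith [hx.2]
  have hquot := ((hasDerivAt_id' x).const_add 1).div ((hasDerivAt_id' x).const_sub 1) hsub.ne'
  refine ((hquot.log (div_pos hadd hsub).ne').div_const 2).congr_deriv ?_
  have : 1 - x ^ 2 = (1 + x) * (1 - x) := by ring
  simp only [Pi.div_apply, this]
  field_simp
  ring

lemma norm_one_sub_conj_mul_sq_sub_norm_sub_sq (a z : ℂ) :
    ‖1 - conj a * z‖ ^ 2 - ‖a - z‖ ^ 2 = (1 - ‖a‖ ^ 2) * (1 - ‖z‖ ^ 2) := by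
  simp only [← normSq_eq_norm_sq, normSq_apply, sub_re, sub_im, mul_re, mul_im, one_re, one_im,
    conj_re, conj_im]
  ring

lemma one_sub_conj_mul_ne_zero {a z : ℂ} (ha : ‖a‖ < 1) (hz : ‖z‖ < 1) :
    1 - conj a * z ≠ 0 := by
  intro h
  have := norm_one_sub_conj_mul_sq_sub_norm_sub_sq a z
  rw [h, norm_zero] at this
  have ha' : 0 < 1 - ‖a‖ ^ 2 := by nlinarith [norm_nonneg a]
  have hz' : 0 < 1 - ‖z‖ ^ 2 := by nlinarith [norm_nonneg z]
  nlinarith [mul_pos ha' hz', sq_nonneg ‖a - z‖]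

noncomputable def moebius (w ζ : ℂ) : ℂ := (w - ζ) / (1 - conj w * ζ)

section Moebius

variable {w ζ : ℂ}

@[simp]
lemma moebius_zero : moebius w 0 = w := by simp [moebius]

lemma one_sub_norm_moebius_sq (hw : ‖w‖ < 1) (hζ : ‖ζ‖ < 1) :
    1 - ‖moebius w ζ‖ ^ 2 = (1 - ‖w‖ ^ 2) * (1 - ‖ζ‖ ^ 2) / ‖1 - conj w * ζ‖ ^ 2 := by
  have hden : ‖1 - conj w * ζ‖ ^ 2 ≠ 0 := by simpa using one_sub_conj_mul_ne_zero hw hζ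
  rw [moebius, norm_div, div_pow, eq_div_iff hden, sub_mul, div_mul_cancel₀ _ hden, one_mul,
    ← norm_one_sub_conj_mul_sq_sub_norm_sub_sq]

lemma norm_moebius_lt_one (hw : ‖w‖ < 1) (hζ : ‖ζ‖ < 1) : ‖moebius w ζ‖ < 1 := by
  have h := one_sub_norm_moebius_sq hw hζ
  have hpos : 0 < (1 - ‖w‖ ^ 2) * (1 - ‖ζ‖ ^ 2) / ‖1 - conj w * ζ‖ ^ 2 := by
    have := one_sub_conj_mul_ne_zero hw hζ
    have : 0 < 1 - ‖w‖ ^ 2 := by nlinarith [norm_nonneg w]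
    have : 0 < 1 - ‖ζ‖ ^ 2 := by nlinarith [norm_nonneg ζ]
    positivity
  exact (sq_lt_one_iff₀ (norm_nonneg _)).1 (by linarith)

lemma moebius_mapsTo (hw : ‖w‖ < 1) : MapsTo (moebius w) (ball 0 1) (ball 0 1) :=
  fun _ hζ => mem_ball_zero_iff.2 (norm_moebius_lt_one hw (mem_ball_zero_iff.1 hζ))

lemma moebius_moebius (hw : ‖w‖ < 1) (hζ : ‖ζ‖ < 1) : moebius w (moebius w ζ) = ζ := by
  have hden := one_sub_conj_mul_ne_zero hw hζ
  have hww := one_sub_conj_mul_ne_zero hw hw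
  unfold moebius
  have hdenom : 1 - conj w * ((w - ζ) / (1 - conj w * ζ)) = (1 - conj w * w) / (1 - conj w * ζ) := by
    field_simp
    ring
  have hdiff : w - (w - ζ) / (1 - conj w * ζ) = ζ * (1 - conj w * w) / (1 - conj w * ζ) := by
    rw [eq_div_iff hden, sub_mul, div_mul_cancel₀ _ hden]
    ring
  rw [hdenom, hdiff, div_div_div_cancel_right₀ hden, mul_div_assoc, div_self hww, mul_one]

lemma hasDerivAt_moebius (hw : ‖w‖ < 1) (hζ : ‖ζ‖ < 1) :
    HasDerivAt (moebius w) (((‖w‖ ^ 2 - 1 : ℝ) : ℂ) / (1 - conj w * ζ) ^ 2) ζ := by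
  have hden := one_sub_conj_mul_ne_zero hw hζ
  refine (((hasDerivAt_id' ζ).const_sub w).div
    (((hasDerivAt_id' ζ).const_mul (conj w)).const_sub 1) hden).congr_deriv ?_
  push_cast
  rw [← Complex.mul_conj']
  ring

lemma one_sub_norm_sq_mul_norm_deriv_moebius (hw : ‖w‖ < 1) (hζ : ‖ζ‖ < 1) :
    (1 - ‖ζ‖ ^ 2) * ‖deriv (moebius w) ζ‖ = 1 - ‖moebius w ζ‖ ^ 2 := by
  rw [(hasDerivAt_moebius hw hζ).deriv, one_sub_norm_moebius_sq hw hζ, norm_div, norm_pow,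
    Complex.norm_real, Real.norm_of_nonpos (by nlinarith [norm_nonneg w])]
  ring

lemma one_sub_norm_sq_mul_norm_deriv_comp_moebius {f : ℂ → ℂ} (hw : ‖w‖ < 1) (hζ : ‖ζ‖ < 1)
    (hf : DifferentiableAt ℂ f (moebius w ζ)) :
    (1 - ‖ζ‖ ^ 2) * ‖deriv (f ∘ moebius w) ζ‖ =
      (1 - ‖moebius w ζ‖ ^ 2) * ‖deriv f (moebius w ζ)‖ := by
  rw [deriv_comp ζ hf (hasDerivAt_moebius hw hζ).differentiableAt, norm_mul,
    ← one_sub_norm_sq_mul_norm_deriv_moebius hw hζ]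
  ring

end Moebius

lemma hypDist_eq_arctanh_norm_moebius (z w : ℂ) : hypDist z w = arctanh ‖moebius w z‖ := by
  rw [hypDist, moebius, ← neg_sub, neg_div, norm_neg]

lemma hypDist_moebius_left {z ζ : ℂ} (hz : ‖z‖ < 1) (hζ : ‖ζ‖ < 1) :
    hypDist (moebius z ζ) z = arctanh ‖ζ‖ := by
  rw [hypDist_eq_arctanh_norm_moebius, moebius_moebius hz hζ]

lemma hypDist_pos {z w : ℂ} (hz : ‖z‖ < 1) (hw : ‖w‖ < 1) (hzw : z ≠ w) : 0 < hypDist z w := by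
  rw [hypDist_eq_arctanh_norm_moebius]
  refine arctanh_pos (norm_pos_iff.2 ?_) (norm_moebius_lt_one hw hz)
  exact div_ne_zero (sub_ne_zero.2 hzw.symm) (one_sub_conj_mul_ne_zero hw hz)

lemma norm_sub_le_mul_arctanh_of_bloch {g : ℂ → ℂ} {M : ℝ}
    (hg : DifferentiableOn ℂ g (ball 0 1))
    (hM : ∀ ζ ∈ ball (0 : ℂ) 1, (1 - ‖ζ‖ ^ 2) * ‖deriv g ζ‖ ≤ M) {c : ℂ} (hc : ‖c‖ < 1) :
    ‖g c - g 0‖ ≤ M * arctanh ‖c‖ := by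
  have hnorm : ∀ t ∈ Icc (0 : ℝ) 1, ‖(t : ℂ) * c‖ = t * ‖c‖ := fun t ht => by
    rw [norm_mul, Complex.norm_real, Real.norm_of_nonneg ht.1]
  have hlt : ∀ t ∈ Icc (0 : ℝ) 1, t * ‖c‖ < 1 := fun t ht =>
    (mul_le_of_le_one_left (norm_nonneg c) ht.2).trans_lt hc
  have hmem : ∀ t ∈ Icc (0 : ℝ) 1, (t : ℂ) * c ∈ ball (0 : ℂ) 1 := fun t ht =>
    mem_ball_zero_iff.2 (hnorm t ht ▸ hlt t ht)
  have hF : ∀ t ∈ Icc (0 : ℝ) 1,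
      HasDerivAt (fun s : ℝ => g (s * c) - g 0) (deriv g (t * c) * c) t := fun t ht =>
    (((hg.differentiableAt (isOpen_ball.mem_nhds (hmem t ht))).hasDerivAt.comp (t : ℂ)
      (hasDerivAt_mul_const c)).comp_ofReal).sub_const (g 0)
  have hB : ∀ t ∈ Icc (0 : ℝ) 1,
      HasDerivAt (fun s => M * arctanh (s * ‖c‖)) (M * (‖c‖ / (1 - (t * ‖c‖) ^ 2))) t :=
    fun t ht => by
      have hdom : t * ‖c‖ ∈ Ioo (-1 : ℝ) 1 :=
        ⟨by nlinarith [ht.1, norm_nonneg c], hlt t ht⟩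
      refine (((hasDerivAt_arctanh hdom).comp t (hasDerivAt_mul_const ‖c‖)).const_mul M)
        |>.congr_deriv ?_
      ring
  have hbound : ∀ t ∈ Ico (0 : ℝ) 1,
      ‖deriv g (t * c) * c‖ ≤ M * (‖c‖ / (1 - (t * ‖c‖) ^ 2)) := fun t ht => by
    have ht := Ico_subset_Icc_self ht
    have hpos : 0 < 1 - (t * ‖c‖) ^ 2 := by
      nlinarith [hlt t ht, mul_nonneg ht.1 (norm_nonneg c)]
    have := hM _ (hmem t ht)
    rw [hnorm t ht] at this
    rw [norm_mul, ← mul_div_assoc, le_div_iff₀ hpos]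
    nlinarith [norm_nonneg c]
  have := image_norm_le_of_norm_deriv_right_le_deriv_boundary'
    (fun t ht => (hF t ht).continuousAt.continuousWithinAt)
    (fun t ht => (hF t (Ico_subset_Icc_self ht)).hasDerivWithinAt) (by simp [arctanh_zero])
    (fun t ht => (hB t ht).continuousAt.continuousWithinAt)
    (fun t ht => (hB t (Ico_subset_Icc_self ht)).hasDerivWithinAt) hbound
    (right_mem_Icc.2 zero_le_one)
  simpa using this

lemma norm_deriv_le_of_norm_sub_le_mul_arctanh {g : ℂ → ℂ} {L : ℝ}
    (hL : ∀ ζ ∈ ball (0 : ℂ) 1, ‖g ζ - g 0‖ ≤ L * arctanh ‖ζ‖) : ‖deriv g 0‖ ≤ L := by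
  have hL0 : 0 ≤ L := by
    have h := hL (1 / 2) (by norm_num)
    have hpos : 0 < arctanh ‖(1 / 2 : ℂ)‖ := arctanh_pos (by norm_num) (by norm_num)
    exact nonneg_of_mul_nonneg_left ((norm_nonneg _).trans h) hpos
  have hr : ∀ r ∈ Ioo (0 : ℝ) 1, ‖deriv g 0‖ * (1 - r) ≤ L := fun r hr => by
    rw [← le_div_iff₀ (sub_pos.2 hr.2)]
    refine norm_deriv_le_of_lip' (div_nonneg hL0 (sub_pos.2 hr.2).le) ?_
    filter_upwards [ball_mem_nhds (0 : ℂ) hr.1] with ζ hζ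
    rw [mem_ball_zero_iff] at hζ
    calc ‖g ζ - g 0‖ ≤ L * arctanh ‖ζ‖ := hL ζ (mem_ball_zero_iff.2 (hζ.trans hr.2))
      _ ≤ L * (‖ζ‖ / (1 - ‖ζ‖)) :=
        mul_le_mul_of_nonneg_left (arctanh_le_div_one_sub (norm_nonneg ζ) (hζ.trans hr.2)) hL0
      _ ≤ L * (‖ζ‖ / (1 - r)) := by gcongr; linarith [hr.2]
      _ = L / (1 - r) * ‖ζ - 0‖ := by rw [sub_zero]; ring
  have hlim : Tendsto (fun r : ℝ => ‖deriv g 0‖ * (1 - r)) (𝓝[>] 0) (𝓝 ‖deriv g 0‖) := by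
    have : Continuous (fun r : ℝ => ‖deriv g 0‖ * (1 - r)) := by fun_prop
    simpa using (this.tendsto 0).mono_left nhdsWithin_le_nhds
  exact le_of_tendsto hlim (by filter_upwards [Ioo_mem_nhdsGT one_pos] using hr)

section Bloch

variable {f : ℂ → ℂ}

theorem norm_sub_le_mul_hypDist_of_bloch {M : ℝ} (hf : DifferentiableOn ℂ f (ball 0 1))
    (hM : ∀ ζ ∈ ball (0 : ℂ) 1, (1 - ‖ζ‖ ^ 2) * ‖deriv f ζ‖ ≤ M) {z w : ℂ}
    (hz : z ∈ ball (0 : ℂ) 1) (hw : w ∈ ball (0 : ℂ) 1) :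
    ‖f z - f w‖ ≤ M * hypDist z w := by
  rw [mem_ball_zero_iff] at hz hw
  have hfφ : ∀ ζ ∈ ball (0 : ℂ) 1, DifferentiableAt ℂ f (moebius w ζ) := fun ζ hζ =>
    hf.differentiableAt (isOpen_ball.mem_nhds (moebius_mapsTo hw hζ))
  have hg : DifferentiableOn ℂ (f ∘ moebius w) (ball 0 1) := fun ζ hζ =>
    ((hfφ ζ hζ).comp ζ (hasDerivAt_moebius hw (mem_ball_zero_iff.1 hζ)).differentiableAt)
      |>.differentiableWithinAt
  have hgM : ∀ ζ ∈ ball (0 : ℂ) 1, (1 - ‖ζ‖ ^ 2) * ‖deriv (f ∘ moebius w) ζ‖ ≤ M :=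
    fun ζ hζ => by
      rw [one_sub_norm_sq_mul_norm_deriv_comp_moebius hw (mem_ball_zero_iff.1 hζ) (hfφ ζ hζ)]
      exact hM _ (moebius_mapsTo hw hζ)
  have := norm_sub_le_mul_arctanh_of_bloch hg hgM (norm_moebius_lt_one hw hz)
  rwa [Function.comp_apply, Function.comp_apply, moebius_moebius hw hz, moebius_zero,
    ← hypDist_eq_arctanh_norm_moebius] at this

theorem bloch_of_norm_sub_le_mul_hypDist {L : ℝ} (hf : DifferentiableOn ℂ f (ball 0 1))
    (hL : ∀ z ∈ ball (0 : ℂ) 1, ∀ w ∈ ball (0 : ℂ) 1, ‖f z - f w‖ ≤ L * hypDist z w)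
    {z : ℂ} (hz : z ∈ ball (0 : ℂ) 1) : (1 - ‖z‖ ^ 2) * ‖deriv f z‖ ≤ L := by
  have hz' := mem_ball_zero_iff.1 hz
  have hfz : DifferentiableAt ℂ f (moebius z 0) := by
    rw [moebius_zero]
    exact hf.differentiableAt (isOpen_ball.mem_nhds hz)
  have := one_sub_norm_sq_mul_norm_deriv_comp_moebius hz' (by simp) hfz
  rw [norm_zero, moebius_zero, zero_pow two_ne_zero, sub_zero, one_mul] at this
  rw [← this]
  refine norm_deriv_le_of_norm_sub_le_mul_arctanh fun ζ hζ => ?_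
  simpa [hypDist_moebius_left hz' (mem_ball_zero_iff.1 hζ)] using
    hL _ (moebius_mapsTo hz' hζ) z hz

lemma blochSemiE_le_ofReal_iff {M : ℝ} (hM : 0 ≤ M) :
    blochSemiE f ≤ ENNReal.ofReal M ↔
      ∀ ζ ∈ ball (0 : ℂ) 1, (1 - ‖ζ‖ ^ 2) * ‖deriv f ζ‖ ≤ M := by
  simp only [blochSemiE, iSup_le_iff, ENNReal.ofReal_le_ofReal_iff hM, Subtype.forall]

lemma lipNumE_le_ofReal_iff {M : ℝ} (hM : 0 ≤ M) :
    lipNumE f ≤ ENNReal.ofReal M ↔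
      ∀ z ∈ ball (0 : ℂ) 1, ∀ w ∈ ball (0 : ℂ) 1, ‖f z - f w‖ ≤ M * hypDist z w := by
  simp only [lipNumE, iSup_le_iff, ENNReal.ofReal_le_ofReal_iff hM, Subtype.forall, Prod.forall]
  refine forall₄_congr fun z hz w hw => ?_
  rcases eq_or_ne z w with rfl | hzw
  · simp [hypDist, arctanh_zero]
  · rw [div_le_iff₀ (hypDist_pos (mem_ball_zero_iff.1 hz) (mem_ball_zero_iff.1 hw) hzw),
      mul_comm]
    exact ⟨fun h => h hzw, fun h _ => h⟩

end Bloch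

/-- A holomorphic `f : 𝔻 → ℂ` is Bloch iff it is Lipschitz from `𝔻` with the
hyperbolic distance to `ℂ` with the Euclidean distance; moreover the Bloch
seminorm equals the Lipschitz number `sup_{z ≠ w} |f(z)-f(w)|/ρ(z,w)`. -/
theorem blochSemi_eq_lipschitz_number
    (f : ℂ → ℂ) (hf : DifferentiableOn ℂ f (ball (0 : ℂ) 1)) :
    (blochSemiE f ≠ ⊤ ↔
      ∃ L : ℝ, ∀ z ∈ ball (0 : ℂ) 1, ∀ w ∈ ball (0 : ℂ) 1,
        ‖f z - f w‖ ≤ L * hypDist z w) ∧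
    blochSemiE f = lipNumE f := by
  have hle_iff : ∀ M, 0 ≤ M → (blochSemiE f ≤ ENNReal.ofReal M ↔ lipNumE f ≤ ENNReal.ofReal M) :=
    fun M hM => by
      rw [blochSemiE_le_ofReal_iff hM, lipNumE_le_ofReal_iff hM]
      exact ⟨fun h _ hz _ hw => norm_sub_le_mul_hypDist_of_bloch hf h hz hw,
        fun h _ hζ => bloch_of_norm_sub_le_mul_hypDist hf h hζ⟩
  refine ⟨⟨fun h => ?_, fun ⟨L, hL⟩ => ?_⟩, ?_⟩
  · have hM := (blochSemiE_le_ofReal_iff ENNReal.toReal_nonneg).1 (ENNReal.ofReal_toReal h).ge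
    exact ⟨_, fun z hz w hw => norm_sub_le_mul_hypDist_of_bloch hf hM hz hw⟩
  · refine ne_top_of_le_ne_top ENNReal.ofReal_ne_top
      ((blochSemiE_le_ofReal_iff (le_max_right L 0)).2 fun ζ hζ => ?_)
    exact (bloch_of_norm_sub_le_mul_hypDist hf hL hζ).trans (le_max_left L 0)
  · refine eq_of_forall_ge_iff fun c => ?_
    rcases eq_or_ne c ⊤ with rfl | hc
    · simp
    · rw [← ENNReal.ofReal_toReal hc]
      exact hle_iff _ ENNReal.toReal_nonneg
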